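/- Let k ≥ 1 be an integer and let G be a (possibly infinite) simple graph. If at least one of the cardinal numbers d_{×k}(G) and d_{×k,t}(G) is infinite, then d_{×k}(G) = d_{×k,t}(G). -/
import Mathlib


open Cardinal

variable {V : Type*}

/-- `S` is a `k`-tuple dominating set of a (possibly infinite) graph `G`: every vertex
outside `S` has at least `k` neighbors in `S`, and every vertex of `S` has at least
`k - 1` neighbors in `S`. -/
def IsKTupleDomSet (G : SimpleGraph V) (k : ℕ) (S : Set V) : Prop :=
  (∀ v ∉ S, (k : Cardinal) ≤ #(S ∩ G.neighborSet v : Set V)) ∧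
  (∀ v ∈ S, ((k - 1 : ℕ) : Cardinal) ≤ #(S ∩ G.neighborSet v : Set V))

/-- `S` is a `k`-tuple total dominating set of `G`: every vertex of `G` has at least `k`
neighbors in `S`. -/
def IsKTupleTotalDomSet (G : SimpleGraph V) (k : ℕ) (S : Set V) : Prop :=
  ∀ v : V, (k : Cardinal) ≤ #(S ∩ G.neighborSet v : Set V)

/-- The `k`-tuple domatic number of a (possibly infinite) graph, as a cardinal: the
supremum of the cardinalities of partitions of the vertex set into `k`-tuple dominating
sets. -/
noncomputable def kDomaticCard (G : SimpleGraph V) (k : ℕ) : Cardinal :=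
  sSup {c | ∃ P : Set (Set V),
    (Setoid.IsPartition P ∧ ∀ S ∈ P, IsKTupleDomSet G k S) ∧ #P = c}

/-- The `k`-tuple total domatic number of a (possibly infinite) graph, as a cardinal:
the supremum of the cardinalities of partitions of the vertex set into `k`-tuple total
dominating sets. -/
noncomputable def kTotalDomaticCard (G : SimpleGraph V) (k : ℕ) : Cardinal :=
  sSup {c | ∃ P : Set (Set V),
    (Setoid.IsPartition P ∧ ∀ S ∈ P, IsKTupleTotalDomSet G k S) ∧ #P = c}

universe u

/-- Grouping lemma: group the parts of a dominating partition along a map `g` whose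
fibers all contain at least two parts; the unions of the fibers form a partition into
total dominating sets, of the same cardinality as the index type. -/
lemma grouping {V : Type u} {G : SimpleGraph V} {k : ℕ} {P : Set (Set V)}
    (hP : Setoid.IsPartition P) (hdom : ∀ S ∈ P, IsKTupleDomSet G k S)
    {ι : Type u} (g : ↥P → ι)
    (hfib : ∀ i : ι, ∃ S T : ↥P, S ≠ T ∧ g S = i ∧ g T = i) :
    ∃ Q : Set (Set V),
      (Setoid.IsPartition Q ∧ ∀ S ∈ Q, IsKTupleTotalDomSet G k S) ∧ #Q = #ι := by
  classical
  -- parts are pairwise disjoint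
  have hdisj : ∀ S ∈ P, ∀ T ∈ P, ∀ a : V, a ∈ S → a ∈ T → S = T := by
    intro S hS T hT a haS haT
    obtain ⟨b, -, hu⟩ := hP.2 a
    rw [hu S ⟨hS, haS⟩, hu T ⟨hT, haT⟩]
  have hne : ∀ S : ↥P, (S : Set V).Nonempty := by
    intro S
    rcases Set.eq_empty_or_nonempty (S : Set V) with h | h
    · exact absurd (h ▸ S.2) hP.1
    · exact h
  set f : ι → Set V := fun i => ⋃ (S : ↥P) (_ : g S = i), (S : Set V) with hf
  have hmem : ∀ (i : ι) (a : V), a ∈ f i ↔ ∃ S : ↥P, g S = i ∧ a ∈ (S : Set V) := by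
    intro i a; simp [hf, Set.mem_iUnion]
  have hsub : ∀ (S : ↥P) (i : ι), g S = i → (S : Set V) ⊆ f i := by
    intro S i hi a ha; exact (hmem i a).2 ⟨S, hi, ha⟩
  have hfne : ∀ i : ι, (f i).Nonempty := by
    intro i
    obtain ⟨S, T, -, hSi, -⟩ := hfib i
    obtain ⟨a, ha⟩ := hne S
    exact ⟨a, hsub S i hSi ha⟩
  have hinj : Function.Injective f := by
    intro i j hij
    obtain ⟨S, T, -, hSi, -⟩ := hfib i
    obtain ⟨a, ha⟩ := hne S
    have hai : a ∈ f j := hij ▸ hsub S i hSi ha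
    obtain ⟨T', hT'j, haT'⟩ := (hmem j a).1 hai
    have : (S : Set V) = (T' : Set V) := hdisj _ S.2 _ T'.2 a ha haT'
    have : S = T' := Subtype.ext this
    rw [← hSi, this, hT'j]
  refine ⟨Set.range f, ⟨⟨?_, ?_⟩, ?_⟩, Cardinal.mk_range_eq f hinj⟩
  · rintro ⟨i, hi⟩
    exact (hfne i).ne_empty hi
  · intro a
    obtain ⟨S, ⟨hS, haS⟩, hu⟩ := hP.2 a
    refine ⟨f (g ⟨S, hS⟩), ⟨⟨g ⟨S, hS⟩, rfl⟩, hsub ⟨S, hS⟩ _ rfl haS⟩, ?_⟩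
    rintro b ⟨⟨j, rfl⟩, haj⟩
    obtain ⟨T', hT'j, haT'⟩ := (hmem j a).1 haj
    have hST' : S = (T' : Set V) := hu _ ⟨T'.2, haT'⟩ ▸ rfl
    have : (⟨S, hS⟩ : ↥P) = T' := Subtype.ext hST'
    rw [← hT'j, ← this]
  · rintro S' ⟨i, rfl⟩ v
    obtain ⟨S, T, hST, hSi, hTi⟩ := hfib i
    have : v ∉ (S : Set V) ∨ v ∉ (T : Set V) := by
      by_contra h
      push_neg at h
      exact hST (Subtype.ext (hdisj _ S.2 _ T.2 v h.1 h.2))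
    rcases this with h | h
    · calc (k : Cardinal) ≤ #((S : Set V) ∩ G.neighborSet v : Set V) :=
            (hdom _ S.2).1 v h
        _ ≤ #(f i ∩ G.neighborSet v : Set V) :=
            Cardinal.mk_le_mk_of_subset (Set.inter_subset_inter_left _ (hsub S i hSi))
    · calc (k : Cardinal) ≤ #((T : Set V) ∩ G.neighborSet v : Set V) :=
            (hdom _ T.2).1 v h
        _ ≤ #(f i ∩ G.neighborSet v : Set V) :=
            Cardinal.mk_le_mk_of_subset (Set.inter_subset_inter_left _ (hsub T i hTi))

/-- Infinite case: an infinite dominating partition yields a total dominating partition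
of the same cardinality, by pairing up the parts. -/
lemma grouping_infinite {V : Type u} {G : SimpleGraph V} {k : ℕ} {P : Set (Set V)}
    (hP : Setoid.IsPartition P) (hdom : ∀ S ∈ P, IsKTupleDomSet G k S)
    (hPinf : ℵ₀ ≤ #P) :
    ∃ Q : Set (Set V),
      (Setoid.IsPartition Q ∧ ∀ S ∈ Q, IsKTupleTotalDomSet G k S) ∧ #Q = #P := by
  have hcard : #↥P = #(↥P × Bool) := by
    rw [Cardinal.mk_prod]
    simp only [Cardinal.mk_bool, Cardinal.lift_id', Cardinal.lift_ofNat, Cardinal.lift_id]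
    rw [mul_two, Cardinal.add_eq_self hPinf]
  obtain ⟨e⟩ := Cardinal.eq.1 hcard
  obtain ⟨Q, hQ, hQcard⟩ := grouping hP hdom (fun S => (e S).1) (fun i => by
    refine ⟨e.symm (i, false), e.symm (i, true), ?_, by simp, by simp⟩
    intro h
    have := e.symm.injective h
    simp at this)
  exact ⟨Q, hQ, hQcard⟩

/-- Finite case: a dominating partition with at least `2 * n` parts yields a total
dominating partition with exactly `n` parts. -/
lemma grouping_finite {V : Type u} {G : SimpleGraph V} {k : ℕ} {P : Set (Set V)}
    (hP : Setoid.IsPartition P) (hdom : ∀ S ∈ P, IsKTupleDomSet G k S)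
    {n : ℕ} (hn : 0 < n) (hle : ((2 * n : ℕ) : Cardinal) ≤ #P) :
    ∃ Q : Set (Set V),
      (Setoid.IsPartition Q ∧ ∀ S ∈ Q, IsKTupleTotalDomSet G k S) ∧ #Q = n := by
  classical
  have hmk : #(ULift.{u} (Fin (2 * n))) = ((2 * n : ℕ) : Cardinal) := by simp
  rw [← hmk] at hle
  obtain ⟨ψ⟩ := Cardinal.le_def _ _ |>.1 hle
  set φ : Fin (2 * n) ↪ ↥P := (Equiv.ulift.symm.toEmbedding.trans ψ) with hφ
  set g : ↥P → ULift.{u} (Fin n) := fun S =>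
    if h : ∃ j : Fin (2 * n), φ j = S then ⟨⟨(h.choose : ℕ) / 2, by
      have := h.choose.isLt; omega⟩⟩ else ⟨⟨0, hn⟩⟩ with hg
  have hgφ : ∀ j : Fin (2 * n), g (φ j) = ⟨⟨(j : ℕ) / 2, by have := j.isLt; omega⟩⟩ := by
    intro j
    have h : ∃ j' : Fin (2 * n), φ j' = φ j := ⟨j, rfl⟩
    have hc : h.choose = j := φ.injective h.choose_spec
    rw [hg]
    simp only [dif_pos h]
    have hval : ((h.choose : ℕ)) / 2 = (j : ℕ) / 2 := by rw [hc]
    exact congrArg ULift.up (Fin.ext hval)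
  obtain ⟨Q, hQ, hQcard⟩ := grouping hP hdom g (fun i => by
    have h0 : 2 * (i.down : ℕ) < 2 * n := by have := i.down.isLt; omega
    have h1 : 2 * (i.down : ℕ) + 1 < 2 * n := by have := i.down.isLt; omega
    refine ⟨φ ⟨2 * i.down, h0⟩, φ ⟨2 * i.down + 1, h1⟩, ?_, ?_, ?_⟩
    · intro h
      have := φ.injective h
      have := congrArg Fin.val this
      simp at this
    · rw [hgφ]
      exact ULift.down_injective (Fin.ext (by first | (simp; omega) | simp | omega))
    · rw [hgφ]
      exact ULift.down_injective (Fin.ext (by first | (simp; omega) | simp | omega)))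
  exact ⟨Q, hQ, by simpa using hQcard⟩


/-- Let `k ≥ 1` be an integer and `G` a (possibly infinite) simple graph. If one of the
cardinal numbers `d_{×k}(G)` and `d_{×k,t}(G)` is infinite, then
`d_{×k}(G) = d_{×k,t}(G)`. -/
theorem kDomaticCard_eq_kTotalDomaticCard [Nonempty V] (G : SimpleGraph V) (k : ℕ)
    (hk : 1 ≤ k)
    (hinf : ℵ₀ ≤ kDomaticCard G k ∨ ℵ₀ ≤ kTotalDomaticCard G k) :
    kDomaticCard G k = kTotalDomaticCard G k := by
  classical
  set D : Set Cardinal := {c | ∃ P : Set (Set V),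
    (Setoid.IsPartition P ∧ ∀ S ∈ P, IsKTupleDomSet G k S) ∧ #P = c} with hDdef
  set T : Set Cardinal := {c | ∃ P : Set (Set V),
    (Setoid.IsPartition P ∧ ∀ S ∈ P, IsKTupleTotalDomSet G k S) ∧ #P = c} with hTdef
  have hDeq : kDomaticCard G k = sSup D := rfl
  have hTeq : kTotalDomaticCard G k = sSup T := rfl
  -- every total dominating partition is a dominating partition
  have hTD : T ⊆ D := by
    rintro c ⟨P, ⟨hpart, htot⟩, hc⟩
    refine ⟨P, ⟨hpart, fun S hS => ⟨fun v _ => htot S hS v, fun v _ => ?_⟩⟩, hc⟩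
    exact le_trans (Nat.cast_le.2 (Nat.sub_le k 1)) (htot S hS v)
  have hbdD : BddAbove D := by
    refine BddAbove.mono ?_ (Cardinal.bddAbove_range (fun P : Set (Set V) => #P))
    rintro c ⟨P, -, hc⟩
    exact ⟨P, hc⟩
  have hbdT : BddAbove T := by
    refine BddAbove.mono ?_ (Cardinal.bddAbove_range (fun P : Set (Set V) => #P))
    rintro c ⟨P, -, hc⟩
    exact ⟨P, hc⟩
  have h1 : kTotalDomaticCard G k ≤ kDomaticCard G k := by
    rw [hDeq, hTeq]
    exact csSup_le' fun c hc => le_csSup hbdD (hTD hc)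
  have hD : ℵ₀ ≤ sSup D := by
    rw [← hDeq]
    exact hinf.elim id fun h => h.trans h1
  -- arbitrarily large dominating partitions exist
  have hbig : ∀ n : ℕ, ∃ c ∈ D, ((2 * n : ℕ) : Cardinal) ≤ c := by
    intro n
    by_contra h
    push_neg at h
    have hle : sSup D ≤ ((2 * n : ℕ) : Cardinal) := csSup_le' fun c hc => (h c hc).le
    exact (Cardinal.nat_lt_aleph0 (2 * n)).not_ge (hD.trans hle)
  have hTge : ∀ n : ℕ, (n : Cardinal) ≤ kTotalDomaticCard G k := by
    intro n
    rcases Nat.eq_zero_or_pos n with rfl | hn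
    · simp
    obtain ⟨c, hc, hle⟩ := hbig n
    obtain ⟨P, ⟨hpart, hdom⟩, rfl⟩ := hc
    obtain ⟨Q, hQ, hQcard⟩ := grouping_finite hpart hdom hn hle
    rw [hTeq]
    exact le_csSup hbdT ⟨Q, hQ, hQcard⟩
  have hTinf : ℵ₀ ≤ kTotalDomaticCard G k := Cardinal.aleph0_le.2 hTge
  refine le_antisymm ?_ h1
  rw [hDeq]
  refine csSup_le' ?_
  rintro c ⟨P, ⟨hpart, hdom⟩, rfl⟩
  rcases lt_or_ge (#↥P) ℵ₀ with h | h
  · exact h.le.trans hTinf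
  · obtain ⟨Q, hQ, hQcard⟩ := grouping_infinite hpart hdom h
    rw [hTeq]
    exact le_csSup hbdT ⟨Q, hQ, hQcard⟩
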